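/- Let d ∈ ℕ with d ≥ 1, let Σ and Σ^π be symmetric positive definite d×d real matrices, and let M be a d×d real matrix with ‖(Σ^π)^{1/2} M (Σ^π)^{-1/2}‖_2 ≤ 1. Let ΔX and ΔY be d×d real matrices, and suppose M̂ := (Σ^{-1} + ΔX)(ΣM + ΔY). Set κ_1 := ‖Σ^{-1/2}Σ^πΣ^{-1/2}‖_2 · ‖Σ^{1/2}(Σ^π)^{-1}Σ^{1/2}‖_2 (the condition number of Σ^{-1/2}Σ^πΣ^{-1/2}). Then ‖(Σ^π)^{1/2} (M̂ − M) (Σ^π)^{-1/2}‖_2 ≤ √κ_1 · ( (1 + ‖Σ^{1/2} (ΔX) Σ^{1/2}‖_2)(1 + ‖Σ^{-1/2} (ΔY) Σ^{-1/2}‖_2) − 1 ). -/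

import Mathlib

open Matrix

namespace Matrix.PosSemidef

/-- The positive semidefinite square root, as `Matrix.PosSemidef.sqrt` was defined in older Mathlib. -/
noncomputable def sqrt {n : Type*} [Fintype n] [DecidableEq n] {A : Matrix n n ℝ}
    (hA : A.PosSemidef) : Matrix n n ℝ :=
  (hA.1.eigenvectorUnitary : Matrix n n ℝ) * diagonal ((↑) ∘ (√·) ∘ hA.1.eigenvalues) *
    (star hA.1.eigenvectorUnitary : Matrix n n ℝ)

end Matrix.PosSemidef

/-- The spectral norm (ℓ²→ℓ² operator norm) of a real square matrix. -/
noncomputable def specNorm {d : ℕ} (A : Matrix (Fin d) (Fin d) ℝ) : ℝ :=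
  ‖Matrix.toEuclideanCLM (𝕜 := ℝ) A‖

/-!
Put `A = Σ^{1/2}`, `P = (Σ^π)^{1/2}` and `T = P A⁻¹`. Conjugation by `A` turns `M̂ - M` into
`X N + Y + X Y` with `X = A ΔX A`, `Y = A⁻¹ ΔY A⁻¹` and `N = A M A⁻¹`, and `N = T⁻¹ K T` for the
contraction `K = P M P⁻¹`. Conjugating by `T` and using the triangle inequality bounds the error by
`‖T‖ ‖T⁻¹‖ (‖X‖ + ‖Y‖ + ‖X‖ ‖Y‖)`. Finally `A⁻¹ Σ^π A⁻¹ = Tᴴ T` and `A (Σ^π)⁻¹ A = T⁻¹ T⁻ᴴ`, so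
the C⋆-identity gives `κ₁ = (‖T‖ ‖T⁻¹‖)²`.
-/

namespace Matrix.PosSemidef

variable {n : Type*} [Fintype n] [DecidableEq n] {A : Matrix n n ℝ}

theorem sqrt_mul_self (hA : A.PosSemidef) : hA.sqrt * hA.sqrt = A := by
  have hU : (star hA.1.eigenvectorUnitary : Matrix n n ℝ) * hA.1.eigenvectorUnitary = 1 :=
    Unitary.star_mul_self_of_mem hA.1.eigenvectorUnitary.prop
  have hD : diagonal ((↑) ∘ (√·) ∘ hA.1.eigenvalues) * diagonal ((↑) ∘ (√·) ∘ hA.1.eigenvalues)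
      = diagonal (RCLike.ofReal ∘ hA.1.eigenvalues : n → ℝ) := by
    rw [diagonal_mul_diagonal]
    congr 1
    funext i
    simp [Real.mul_self_sqrt (hA.eigenvalues_nonneg i)]
  conv_rhs => rw [hA.1.spectral_theorem, Unitary.conjStarAlgAut_apply, ← hD]
  simp only [sqrt, Matrix.mul_assoc]
  rw [← Matrix.mul_assoc (star _) _ (diagonal _ * _), hU, Matrix.one_mul]

theorem isHermitian_sqrt (hA : A.PosSemidef) : hA.sqrt.IsHermitian := by
  simp [IsHermitian, sqrt, Matrix.star_eq_conjTranspose, Matrix.mul_assoc]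

end Matrix.PosSemidef

theorem Matrix.PosDef.isUnit_det_sqrt {n : Type*} [Fintype n] [DecidableEq n] {A : Matrix n n ℝ}
    (hA : A.PosDef) : IsUnit hA.posSemidef.sqrt.det := by
  have hsq : IsUnit (hA.posSemidef.sqrt * hA.posSemidef.sqrt) := by
    rw [hA.posSemidef.sqrt_mul_self]
    exact hA.isUnit
  exact (isUnit_iff_isUnit_det _).mp (isUnit_of_mul_isUnit_left hsq)

namespace Matrix

variable {n α : Type*} [Fintype n] [DecidableEq n] [CommRing α]

theorem conj_nonsing_inv_conj {B : Matrix n n α} (hB : IsUnit B.det) (A E : Matrix n n α) :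
    A * B⁻¹ * (B * E * B⁻¹) * (B * A⁻¹) = A * E * A⁻¹ := by
  simp only [Matrix.mul_assoc, nonsing_inv_mul_cancel_left _ _ hB]

theorem star_mul_nonsing_inv [StarRing α] {B C : Matrix n n α} (hB : B.IsHermitian)
    (hC : C.IsHermitian) : star (B * C⁻¹) = C⁻¹ * B := by
  rw [star_eq_conjTranspose, conjTranspose_mul, conjTranspose_nonsing_inv, hB.eq, hC.eq]

theorem conj_perturbed_product_sub_eq {A S : Matrix n n α} (hA : IsUnit A.det) (hAS : A * A = S)
    (M ΔX ΔY : Matrix n n α) :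
    A * ((S⁻¹ + ΔX) * (S * M + ΔY) - M) * A⁻¹ =
      A * ΔX * A * (A * M * A⁻¹) + A⁻¹ * ΔY * A⁻¹ + A * ΔX * A * (A⁻¹ * ΔY * A⁻¹) := by
  subst hAS
  rw [Matrix.mul_inv_rev]
  simp only [Matrix.mul_add, Matrix.add_mul, Matrix.mul_sub, Matrix.sub_mul, Matrix.mul_assoc,
    mul_nonsing_inv_cancel_left _ _ hA, nonsing_inv_mul_cancel_left _ _ hA]
  abel

end Matrix

theorem norm_conj_perturbation_le {R : Type*} [NormedRing R] {t t' k : R} (htt' : t * t' = 1)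
    (hk : ‖k‖ ≤ 1) (x y : R) :
    ‖t * (x * (t' * k * t) + y + x * y) * t'‖ ≤ ‖t‖ * ‖t'‖ * ((1 + ‖x‖) * (1 + ‖y‖) - 1) := by
  have hexpand : t * (x * (t' * k * t) + y + x * y) * t' =
      t * x * t' * k + t * y * t' + t * x * y * t' := by
    simp only [mul_add, add_mul, mul_assoc, htt', mul_one]
  have hXK : ‖t * x * t' * k‖ ≤ ‖t‖ * ‖x‖ * ‖t'‖ :=
    calc ‖t * x * t' * k‖ ≤ ‖t * x * t'‖ * ‖k‖ := norm_mul_le _ _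
      _ ≤ ‖t * x * t'‖ := mul_le_of_le_one_right (norm_nonneg _) hk
      _ ≤ ‖t‖ * ‖x‖ * ‖t'‖ := norm_mul₃_le
  have hY : ‖t * y * t'‖ ≤ ‖t‖ * ‖y‖ * ‖t'‖ := norm_mul₃_le
  have hXY : ‖t * x * y * t'‖ ≤ ‖t‖ * ‖x‖ * ‖y‖ * ‖t'‖ :=
    calc ‖t * x * y * t'‖ ≤ ‖t * x * y‖ * ‖t'‖ := norm_mul_le _ _
      _ ≤ ‖t‖ * ‖x‖ * ‖y‖ * ‖t'‖ := by gcongr; exact norm_mul₃_le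
  rw [hexpand]
  calc _ ≤ ‖t * x * t' * k‖ + ‖t * y * t'‖ + ‖t * x * y * t'‖ := norm_add₃_le
    _ ≤ _ := by linear_combination hXK + hY + hXY

theorem CStarRing.sqrt_norm_star_mul_self_mul_norm_self_mul_star {R : Type*}
    [NonUnitalNormedRing R] [StarRing R] [CStarRing R] (a b : R) :
    √(‖star a * a‖ * ‖b * star b‖) = ‖a‖ * ‖b‖ := by
  rw [CStarRing.norm_star_mul_self, CStarRing.norm_self_mul_star,
    show ‖a‖ * ‖a‖ * (‖b‖ * ‖b‖) = (‖a‖ * ‖b‖) ^ 2 by ring, Real.sqrt_sq (by positivity)]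

open scoped Matrix.Norms.L2Operator in
theorem specNorm_eq_norm {d : ℕ} (A : Matrix (Fin d) (Fin d) ℝ) : specNorm A = ‖A‖ := rfl

theorem embedding_error_bound_general (d : ℕ)
    (S Spi : Matrix (Fin d) (Fin d) ℝ) (hS : S.PosDef) (hSpi : Spi.PosDef)
    (M : Matrix (Fin d) (Fin d) ℝ)
    (hcontr : specNorm (hSpi.posSemidef.sqrt * M * (hSpi.posSemidef.sqrt)⁻¹) ≤ 1)
    (ΔX ΔY Mhat : Matrix (Fin d) (Fin d) ℝ)
    (hMhat : Mhat = (S⁻¹ + ΔX) * (S * M + ΔY))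
    (κ1 : ℝ)
    (hκ1 : κ1 = specNorm ((hS.posSemidef.sqrt)⁻¹ * Spi * (hS.posSemidef.sqrt)⁻¹)
        * specNorm (hS.posSemidef.sqrt * Spi⁻¹ * hS.posSemidef.sqrt)) :
    specNorm (hSpi.posSemidef.sqrt * (Mhat - M) * (hSpi.posSemidef.sqrt)⁻¹)
      ≤ Real.sqrt κ1
        * ((1 + specNorm (hS.posSemidef.sqrt * ΔX * hS.posSemidef.sqrt))
            * (1 + specNorm ((hS.posSemidef.sqrt)⁻¹ * ΔY * (hS.posSemidef.sqrt)⁻¹)) - 1) := by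
  set A := hS.posSemidef.sqrt
  set P := hSpi.posSemidef.sqrt
  have hA : IsUnit A.det := hS.isUnit_det_sqrt
  have hP : IsUnit P.det := hSpi.isUnit_det_sqrt
  have hAA : A * A = S := hS.posSemidef.sqrt_mul_self
  have hPP : P * P = Spi := hSpi.posSemidef.sqrt_mul_self
  have hAH : A.IsHermitian := hS.posSemidef.isHermitian_sqrt
  have hPH : P.IsHermitian := hSpi.posSemidef.isHermitian_sqrt
  clear_value A P
  subst hPP
  have hκ : κ1 = specNorm (star (P * A⁻¹) * (P * A⁻¹)) * specNorm (A * P⁻¹ * star (A * P⁻¹)) := by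
    rw [hκ1, star_mul_nonsing_inv hPH hAH, star_mul_nonsing_inv hAH hPH, Matrix.mul_inv_rev]
    simp only [Matrix.mul_assoc]
  have herr : P * (Mhat - M) * P⁻¹ = P * A⁻¹ * (A * ΔX * A * (A * P⁻¹ * (P * M * P⁻¹) * (P * A⁻¹))
      + A⁻¹ * ΔY * A⁻¹ + A * ΔX * A * (A⁻¹ * ΔY * A⁻¹)) * (A * P⁻¹) := by
    rw [conj_nonsing_inv_conj hP, ← conj_perturbed_product_sub_eq hA hAA,
      hMhat, conj_nonsing_inv_conj hA]
  have hTT' : P * A⁻¹ * (A * P⁻¹) = 1 := by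
    rw [Matrix.mul_assoc, nonsing_inv_mul_cancel_left _ _ hA, mul_nonsing_inv _ hP]
  rw [hκ, herr]
  open scoped Matrix.Norms.L2Operator in
  (simp only [specNorm_eq_norm] at hcontr ⊢
   rw [CStarRing.sqrt_norm_star_mul_self_mul_norm_self_mul_star]
   exact norm_conj_perturbation_le hTT' hcontr _ _)

/-- **Error bound for the empirical conditional mean embedding.**
If `M̂ = (Σ⁻¹ + ΔX)(ΣM + ΔY)` and `‖(Σ^π)^{1/2} M (Σ^π)^{-1/2}‖₂ ≤ 1`, then
`‖(Σ^π)^{1/2}(M̂ − M)(Σ^π)^{-1/2}‖₂ ≤ √κ₁ ((1 + ‖Σ^{1/2}ΔX Σ^{1/2}‖₂)(1 + ‖Σ^{-1/2}ΔY Σ^{-1/2}‖₂) − 1)`,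
where `κ₁` is the condition number of `Σ^{-1/2} Σ^π Σ^{-1/2}`. -/
theorem embedding_error_bound (d : ℕ) (hd : 1 ≤ d)
    (S Spi : Matrix (Fin d) (Fin d) ℝ) (hS : S.PosDef) (hSpi : Spi.PosDef)
    (M : Matrix (Fin d) (Fin d) ℝ)
    (hcontr : specNorm (hSpi.posSemidef.sqrt * M * (hSpi.posSemidef.sqrt)⁻¹) ≤ 1)
    (ΔX ΔY Mhat : Matrix (Fin d) (Fin d) ℝ)
    (hMhat : Mhat = (S⁻¹ + ΔX) * (S * M + ΔY))
    (κ1 : ℝ)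
    (hκ1 : κ1 = specNorm ((hS.posSemidef.sqrt)⁻¹ * Spi * (hS.posSemidef.sqrt)⁻¹)
        * specNorm (hS.posSemidef.sqrt * Spi⁻¹ * hS.posSemidef.sqrt)) :
    specNorm (hSpi.posSemidef.sqrt * (Mhat - M) * (hSpi.posSemidef.sqrt)⁻¹)
      ≤ Real.sqrt κ1
        * ((1 + specNorm (hS.posSemidef.sqrt * ΔX * hS.posSemidef.sqrt))
            * (1 + specNorm ((hS.posSemidef.sqrt)⁻¹ * ΔY * (hS.posSemidef.sqrt)⁻¹)) - 1) :=
  embedding_error_bound_general d S Spi hS hSpi M hcontr ΔX ΔY Mhat hMhat κ1 hκ1
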